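/- arXiv:2402.08269 — 3 statements merged into one kernel-verified Lean document; each statement's English description precedes it below -/
import Mathlib

section
/- Let x⁽¹⁾ < ⋯ < x⁽ⁿ⁾ be real numbers with n ≥ 2. For each i ∈ {1,…,n}, the set of (w,b) ∈ ℝ² such that for all j, (w·x⁽ʲ⁾ + b ≥ 0 ⟺ j ≥ i) equals the set {λ((1−t)(1,−x⁽ⁱ⁻¹⁾) + t(1,−x⁽ⁱ⁾)) : λ > 0, t ∈ (0,1]} when i ≥ 2, i.e., the open-closed conical segment between (1,−x⁽ⁱ⁻¹⁾) and (1,−x⁽ⁱ⁾) scaled by positive reals. -/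
/-!
A pattern `(0,…,0,1,…,1)` switching at `i` is realized by `(w, b)` exactly when the affine
function `w·x + b` is negative at `x⁽ⁱ⁻¹⁾` and nonnegative at `x⁽ⁱ⁾`; by monotonicity of the sample
the remaining inputs then follow. These two conditions force `w > 0`, and dividing by `w` they
say that the root `-b/w` lies in `(x⁽ⁱ⁻¹⁾, x⁽ⁱ⁾]`, which is the conical segment with `λ = w`.
-/

open Set

theorem activation_suffix_iff_of_covBy {ι : Type*} [LinearOrder ι] {x : ι → ℝ}
    (hx : Monotone x) {i' i : ι} (hi : i' ⋖ i) (w b : ℝ) :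
    (∀ j, (0 ≤ w * x j + b ↔ i ≤ j)) ↔ w * x i' + b < 0 ∧ 0 ≤ w * x i + b := by
  constructor
  · intro h
    exact ⟨not_le.mp fun h' => hi.lt.not_ge ((h i').mp h'), (h i).mpr le_rfl⟩
  · rintro ⟨hneg, hnonneg⟩ j
    have hw : 0 < w := by nlinarith [hx hi.le]
    constructor
    · intro hj
      by_contra hji
      have : x j ≤ x i' := hx (hi.le_of_lt (not_le.mp hji))
      nlinarith
    · intro hij
      have : x i ≤ x j := hx hij
      nlinarith

theorem smul_add_smul_one_neg (lam t a c : ℝ) :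
    lam • ((1 - t) • ((1 : ℝ), -a) + t • ((1 : ℝ), -c)) = (lam, -(lam * ((1 - t) * a + t * c))) := by
  simp only [Prod.smul_mk, Prod.mk_add_mk, smul_eq_mul, Prod.mk.injEq]
  constructor <;> ring

theorem exists_mem_conicalSegment_iff {a c : ℝ} (hac : a < c) (p : ℝ × ℝ) :
    (∃ lam > (0 : ℝ), ∃ t ∈ Ioc (0 : ℝ) 1,
        p = lam • ((1 - t) • ((1 : ℝ), -a) + t • ((1 : ℝ), -c))) ↔
      p.1 * a + p.2 < 0 ∧ 0 ≤ p.1 * c + p.2 := by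
  have hca : 0 < c - a := sub_pos.mpr hac
  simp only [smul_add_smul_one_neg]
  constructor
  · rintro ⟨lam, hlam, t, ⟨ht0, ht1⟩, rfl⟩
    constructor
    · nlinarith [mul_pos hlam (mul_pos ht0 hca)]
    · nlinarith [mul_nonneg hlam.le (mul_nonneg (sub_nonneg.mpr ht1) hca.le)]
  · obtain ⟨w, b⟩ := p
    rintro ⟨hneg, hnonneg⟩
    have hw : 0 < w := by nlinarith
    -- `t` places the root `-b/w` of the affine function on the segment from `a` to `c`
    refine ⟨w, hw, (-b / w - a) / (c - a), ⟨?_, ?_⟩, ?_⟩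
    · rw [lt_div_iff₀ hca, lt_sub_iff_add_lt, lt_div_iff₀ hw]
      linarith
    · rw [div_le_one hca, sub_le_sub_iff_right, div_le_iff₀ hw]
      linarith
    · ext
      · rfl
      · field_simp
        ring

theorem stmt2_general (n : ℕ) (x : Fin n → ℝ) (hx : StrictMono x)
    (i : Fin n) (hi : 1 ≤ (i : ℕ)) :
    {p : ℝ × ℝ | ∀ j : Fin n, (0 ≤ p.1 * x j + p.2 ↔ i ≤ j)} =
      {p : ℝ × ℝ | ∃ lam > (0 : ℝ), ∃ t ∈ Set.Ioc (0 : ℝ) 1,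
        p = lam • ((1 - t) • ((1 : ℝ), -x ⟨(i : ℕ) - 1, lt_of_le_of_lt (Nat.sub_le _ _) i.isLt⟩)
              + t • ((1 : ℝ), -x i))} := by
  set i' : Fin n := ⟨(i : ℕ) - 1, lt_of_le_of_lt (Nat.sub_le _ _) i.isLt⟩
  have hcov : i' ⋖ i := by
    rw [Fin.covBy_iff, Nat.covBy_iff_add_one_eq]
    exact Nat.sub_add_cancel hi
  ext p
  exact (activation_suffix_iff_of_covBy hx.monotone hcov p.1 p.2).trans
    (exists_mem_conicalSegment_iff (hx hcov.lt) p).symm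

/-- The activation region of the suffix pattern with first 1 at (0-based) position `i ≥ 1`
equals the conical open-closed segment `ℝ_{>0}((1,−x^{(i−1)}), (1,−x^{(i)})]`. -/
theorem stmt2 (n : ℕ) (hn : 2 ≤ n) (x : Fin n → ℝ) (hx : StrictMono x)
    (i : Fin n) (hi : 1 ≤ (i : ℕ)) :
    {p : ℝ × ℝ | ∀ j : Fin n, (0 ≤ p.1 * x j + p.2 ↔ i ≤ j)} =
      {p : ℝ × ℝ | ∃ lam > (0 : ℝ), ∃ t ∈ Set.Ioc (0 : ℝ) 1,
        p = lam • ((1 - t) • ((1 : ℝ), -x ⟨(i : ℕ) - 1, lt_of_le_of_lt (Nat.sub_le _ _) i.isLt⟩)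
              + t • ((1 : ℝ), -x i))} :=
  stmt2_general n x hx i hi
end

section
/- Let x⁽¹⁾ < ⋯ < x⁽ⁿ⁾ be real numbers with n ≥ 2. The 2n activation regions (the sets of (w,b) ∈ ℝ² realizing each of the 2n monotone activation patterns on the sample) are pairwise disjoint, cover all of ℝ², and each one is a convex cone closed under multiplication by positive scalars. -/
/-!
For `w ≥ 0` (resp. `w ≤ 0`) the set of indices `j` with `0 ≤ w * x j + b` is an upper (resp. lower)
set of `Fin n`, because `x` is monotone; in a nonempty finite chain such sets are exactly the
suffixes and prefixes, which gives the cover. A region is a fibre of `(w, b) ↦ active set`, so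
distinct patterns give disjoint regions, and it is an intersection of closed and open half-planes
bounded by lines through the origin, hence a convex cone.
-/

open Set

section ActivationRegion

variable {𝕜 E ι : Type*} [Field 𝕜] [LinearOrder 𝕜] {f : ι → E → 𝕜}

def activationRegion (f : ι → E → 𝕜) (s : Set ι) : Set E :=
  {p | ∀ j, 0 ≤ f j p ↔ j ∈ s}

theorem mem_activationRegion_setOf_nonneg (p : E) : p ∈ activationRegion f {j | 0 ≤ f j p} :=
  fun _ => Iff.rfl

theorem disjoint_activationRegion {s t : Set ι} (hst : s ≠ t) :
    Disjoint (activationRegion f s) (activationRegion f t) :=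
  disjoint_left.2 fun _ hs ht => hst <| ext fun j => (hs j).symm.trans (ht j)

variable [IsStrictOrderedRing 𝕜] [AddCommGroup E] [Module 𝕜 E]

theorem convex_activationRegion (hf : ∀ j, IsLinearMap 𝕜 (f j)) (s : Set ι) :
    Convex 𝕜 (activationRegion f s) := by
  have : activationRegion f s = ⋂ j, {p | 0 ≤ f j p ↔ j ∈ s} := by ext; simp [activationRegion]
  rw [this]
  refine convex_iInter fun j => ?_
  by_cases hj : j ∈ s
  · simpa [hj] using convex_halfSpace_ge (hf j) 0
  · simpa [hj] using convex_halfSpace_lt (hf j) 0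

theorem smul_mem_activationRegion (hf : ∀ j, IsLinearMap 𝕜 (f j)) {s : Set ι} {c : 𝕜} (hc : 0 < c)
    {p : E} (hp : p ∈ activationRegion f s) : c • p ∈ activationRegion f s := fun j => by
  rw [(hf j).map_smul, smul_eq_mul, mul_nonneg_iff_of_pos_left hc]
  exact hp j

end ActivationRegion

section MonotonePattern

variable {α : Type*} [LinearOrder α]

/-- A pattern is encoded by its set of active indices: `inl i` is the suffix pattern starting at `i`,
and `inr i` the prefix pattern of length `i`. -/
def monotonePattern : α ⊕ α → Set α :=
  Sum.elim Ici Iio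

theorem monotonePattern_injective : Function.Injective (monotonePattern (α := α)) :=
  Ici_injective.sumElim Iio_injective fun i i' h => by
    have hii' : i < i' := h.subst (motive := (i ∈ ·)) self_mem_Ici
    exact (lt_irrefl i') (h ▸ hii'.le : i' ∈ Iio i')

theorem exists_monotonePattern_eq_of_isUpperSet [WellFoundedLT α] [OrderBot α] {s : Set α}
    (hs : IsUpperSet s) : ∃ k, monotonePattern k = s := by
  obtain rfl | ⟨i, rfl⟩ := hs.eq_empty_or_Ici
  · exact ⟨.inr ⊥, Iio_bot⟩
  · exact ⟨.inl i, rfl⟩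

theorem exists_monotonePattern_eq_of_isLowerSet [WellFoundedLT α] [OrderBot α] {s : Set α}
    (hs : IsLowerSet s) : ∃ k, monotonePattern k = s := by
  obtain rfl | ⟨i, rfl⟩ := hs.eq_univ_or_Iio
  · exact ⟨.inl ⊥, Ici_bot⟩
  · exact ⟨.inr i, rfl⟩

end MonotonePattern

section Neuron

theorem isLinearMap_fst_mul_add_snd {R : Type*} [CommSemiring R] (t : R) :
    IsLinearMap R fun p : R × R => p.1 * t + p.2 where
  map_add p q := by simp only [Prod.fst_add, Prod.snd_add]; ring
  map_smul c p := by simp only [Prod.smul_fst, Prod.smul_snd, smul_eq_mul]; ring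

variable {𝕜 ι : Type*} [Field 𝕜] [LinearOrder 𝕜] [IsStrictOrderedRing 𝕜]

theorem isUpperSet_setOf_nonneg [Preorder ι] {x : ι → 𝕜} (hx : Monotone x) {w : 𝕜} (hw : 0 ≤ w)
    (b : 𝕜) : IsUpperSet {j | 0 ≤ w * x j + b} := fun i j hij (hi : 0 ≤ w * x i + b) =>
  show 0 ≤ w * x j + b by linarith [mul_le_mul_of_nonneg_left (hx hij) hw]

theorem isLowerSet_setOf_nonneg [Preorder ι] {x : ι → 𝕜} (hx : Monotone x) {w : 𝕜} (hw : w ≤ 0)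
    (b : 𝕜) : IsLowerSet {j | 0 ≤ w * x j + b} := fun i j hij (hi : 0 ≤ w * x i + b) =>
  show 0 ≤ w * x j + b by linarith [mul_le_mul_of_nonpos_left (hx hij) hw]

theorem exists_monotonePattern_eq_setOf_nonneg [LinearOrder ι] [WellFoundedLT ι] [OrderBot ι]
    {x : ι → 𝕜} (hx : Monotone x) (p : 𝕜 × 𝕜) :
    ∃ k, monotonePattern k = {j | 0 ≤ p.1 * x j + p.2} := by
  rcases le_total 0 p.1 with hw | hw
  · exact exists_monotonePattern_eq_of_isUpperSet (isUpperSet_setOf_nonneg hx hw p.2)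
  · exact exists_monotonePattern_eq_of_isLowerSet (isLowerSet_setOf_nonneg hx hw p.2)

end Neuron

/-- The 2n activation regions (for the n suffix patterns `j ↦ (i ≤ j)` and the n prefix
patterns `j ↦ (j < i)`) are pairwise disjoint, cover ℝ², and each is a convex cone
closed under multiplication by positive scalars. -/
theorem stmt3 (n : ℕ) (hn : 2 ≤ n) (x : Fin n → ℝ) (hx : StrictMono x) :
    let pat : Fin n ⊕ Fin n → Fin n → Prop :=
      fun k j => Sum.elim (fun i : Fin n => i ≤ j) (fun i : Fin n => j < i) k
    let region : Fin n ⊕ Fin n → Set (ℝ × ℝ) :=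
      fun k => {p : ℝ × ℝ | ∀ j : Fin n, (0 ≤ p.1 * x j + p.2 ↔ pat k j)}
    (∀ k k' : Fin n ⊕ Fin n, k ≠ k' → region k ∩ region k' = ∅) ∧
    (⋃ k, region k) = Set.univ ∧
    (∀ k, Convex ℝ (region k) ∧ ∀ c : ℝ, 0 < c → ∀ p ∈ region k, c • p ∈ region k) := by
  intro pat region
  have : NeZero n := ⟨by omega⟩
  have hlin j := isLinearMap_fst_mul_add_snd (x j)
  have hregion : ∀ k,
      region k = activationRegion (fun j p => p.1 * x j + p.2) (monotonePattern k) := by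
    rintro (i | i) <;> rfl
  simp only [hregion]
  refine ⟨fun k k' hk => (disjoint_activationRegion (monotonePattern_injective.ne hk)).inter_eq,
    eq_univ_of_forall fun p => ?_, fun k => ⟨convex_activationRegion hlin _,
      fun c hc p hp => smul_mem_activationRegion hlin hc hp⟩⟩
  obtain ⟨k, hk⟩ := exists_monotonePattern_eq_setOf_nonneg hx.monotone p
  exact mem_iUnion.2 ⟨k, hk ▸ mem_activationRegion_setOf_nonneg p⟩
end

section
/- Let x⁽¹⁾ < ⋯ < x⁽ⁿ⁾ be reals, n ≥ 2, and for 2 ≤ i ≤ n let e_{i−1} = σ(X − x⁽ⁱ⁻¹⁾·1) and e_i = σ(X − x⁽ⁱ⁾·1) where X = (x⁽¹⁾,…,x⁽ⁿ⁾), 1 is the all-ones vector, and σ is applied entrywise as max(·,0). Then {σ(wX + b·1) : (w,b) realizes activation pattern (0,…,0,1,…,1) with first 1 at position i} = {λ((1−t)e_{i−1} + t·e_i) : λ > 0, t ∈ (0,1]}. -/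
/-!
A neuron realizes the suffix pattern starting at `i` exactly when `w > 0` and its kink
`c = -b/w` lies in `(x⁽ⁱ⁻¹⁾, x⁽ⁱ⁾]`; its image is then `w • σ(X - c·1)`. Writing
`c = (1-t) x⁽ⁱ⁻¹⁾ + t x⁽ⁱ⁾` with `t ∈ (0,1]`, the map `c ↦ σ(y - c)` is affine on that interval
for every sample point `y`, since no sample point lies strictly inside it, so
`σ(X - c·1) = (1-t) e_{i-1} + t e_i`.
-/

open Set

lemma max_sub_convex_comb_eq {a b t y : ℝ} (hab : a ≤ b) (ht0 : 0 ≤ t) (ht1 : t ≤ 1)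
    (hy : y ≤ a ∨ b ≤ y) :
    max (y - ((1 - t) * a + t * b)) 0 = (1 - t) * max (y - a) 0 + t * max (y - b) 0 := by
  rcases hy with hy | hy
  · rw [max_eq_right (by nlinarith), max_eq_right (by linarith), max_eq_right (by linarith)]
    ring
  · rw [max_eq_left (by nlinarith), max_eq_left (by linarith), max_eq_left (by linarith)]
    ring

lemma relu_sub_convex_comb {ι : Type*} (x : ι → ℝ) {a b t : ℝ} (hab : a ≤ b) (ht0 : 0 ≤ t)
    (ht1 : t ≤ 1) (hgap : ∀ j, x j ≤ a ∨ b ≤ x j) :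
    (fun j => max (x j - ((1 - t) * a + t * b)) 0) =
      (1 - t) • (fun j => max (x j - a) 0) + t • (fun j => max (x j - b) 0) := by
  funext j
  exact max_sub_convex_comb_eq hab ht0 ht1 (hgap j)

lemma relu_mul_add_eq_smul {ι : Type*} (x : ι → ℝ) {w : ℝ} (b : ℝ) (hw : 0 < w) :
    (fun j => max (w * x j + b) 0) = w • fun j => max (x j - -b / w) 0 := by
  funext j
  rw [Pi.smul_apply, smul_eq_mul, mul_max_of_nonneg _ _ hw.le, mul_zero, mul_sub,
    mul_div_cancel₀ _ hw.ne', sub_neg_eq_add]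

lemma convex_comb_mem_Ioc {a b t : ℝ} (hab : a < b) (ht : t ∈ Ioc (0 : ℝ) 1) :
    (1 - t) * a + t * b ∈ Ioc a b := by
  obtain ⟨ht0, ht1⟩ := ht
  constructor <;> nlinarith

lemma exists_convex_comb_eq_of_mem_Ioc {a b c : ℝ} (hab : a < b) (hc : c ∈ Ioc a b) :
    ∃ t ∈ Ioc (0 : ℝ) 1, (1 - t) * a + t * b = c := by
  have hba : 0 < b - a := sub_pos.2 hab
  refine ⟨(c - a) / (b - a), ⟨div_pos (by linarith [hc.1]) hba, ?_⟩, ?_⟩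
  · exact (div_le_one hba).2 (by linarith [hc.2])
  · field_simp
    ring

section Sample

variable {n : ℕ} {x : Fin n → ℝ} {i' i : Fin n}

lemma StrictMono.le_or_le_of_succ_eq (hx : StrictMono x) (hi : (i' : ℕ) + 1 = i) (j : Fin n) :
    x j ≤ x i' ∨ x i ≤ x j := by
  rcases le_or_gt i j with h | h
  · exact Or.inr (hx.monotone h)
  · exact Or.inl (hx.monotone (Fin.le_def.2 (by rw [Fin.lt_def] at h; omega)))

lemma StrictMono.le_apply_iff_of_mem_Ioc (hx : StrictMono x) (hi : (i' : ℕ) + 1 = i) {c : ℝ}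
    (hc : c ∈ Ioc (x i') (x i)) (j : Fin n) : c ≤ x j ↔ i ≤ j := by
  refine ⟨fun h => ?_, fun h => hc.2.trans (hx.monotone h)⟩
  by_contra hj
  have hji' : j ≤ i' := Fin.le_def.2 (by rw [not_le, Fin.lt_def] at hj; omega)
  linarith [hx.monotone hji', hc.1]

lemma StrictMono.suffix_pattern_iff (hx : StrictMono x) (hi : (i' : ℕ) + 1 = i) {w b : ℝ} :
    (∀ j, 0 ≤ w * x j + b ↔ i ≤ j) ↔ 0 < w ∧ -b / w ∈ Ioc (x i') (x i) := by
  constructor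
  · intro hpat
    have hi'i : x i' < x i := hx (Fin.lt_def.2 (by omega))
    have hon : 0 ≤ w * x i + b := (hpat i).2 le_rfl
    have hoff : w * x i' + b < 0 := not_le.1 fun h => by
      have := (hpat i').1 h
      rw [Fin.le_def] at this
      omega
    have hw : 0 < w := by nlinarith
    exact ⟨hw, (lt_div_iff₀ hw).2 (by linarith), (div_le_iff₀ hw).2 (by linarith)⟩
  · rintro ⟨hw, hc⟩ j
    rw [← hx.le_apply_iff_of_mem_Ioc hi hc j, div_le_iff₀ hw]
    constructor <;> intro h <;> linarith

end Sample

theorem stmt4_general (n : ℕ) (x : Fin n → ℝ) (hx : StrictMono x)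
    (i : Fin n) (hi : 1 ≤ (i : ℕ)) :
    {v : Fin n → ℝ | ∃ w b : ℝ, (∀ j : Fin n, (0 ≤ w * x j + b ↔ i ≤ j)) ∧
        v = fun j => max (w * x j + b) 0} =
      {v : Fin n → ℝ | ∃ lam > (0 : ℝ), ∃ t ∈ Set.Ioc (0 : ℝ) 1,
        v = lam • ((1 - t) • (fun j =>
              max (x j - x ⟨(i : ℕ) - 1, lt_of_le_of_lt (Nat.sub_le _ _) i.isLt⟩) 0)
            + t • (fun j => max (x j - x i) 0))} := by
  set i' : Fin n := ⟨(i : ℕ) - 1, lt_of_le_of_lt (Nat.sub_le _ _) i.isLt⟩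
  have hi' : (i' : ℕ) + 1 = i := by simp only [i']; omega
  have hlt : x i' < x i := hx (Fin.lt_def.2 (by omega))
  have hgap := hx.le_or_le_of_succ_eq hi'
  ext v
  constructor
  · rintro ⟨w, b, hpat, rfl⟩
    obtain ⟨hw, hc⟩ := (hx.suffix_pattern_iff hi').1 hpat
    obtain ⟨t, ht, hct⟩ := exists_convex_comb_eq_of_mem_Ioc hlt hc
    refine ⟨w, hw, t, ht, ?_⟩
    rw [relu_mul_add_eq_smul x b hw, ← hct, relu_sub_convex_comb x hlt.le ht.1.le ht.2 hgap]
  · rintro ⟨lam, hlam, t, ht, rfl⟩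
    set c := (1 - t) * x i' + t * x i
    have hkink : -(-(lam * c)) / lam = c := by field_simp
    refine ⟨lam, -(lam * c), (hx.suffix_pattern_iff hi').2 ⟨hlam, ?_⟩, ?_⟩
    · rw [hkink]
      exact convex_comb_mem_Ioc hlt ht
    · rw [relu_mul_add_eq_smul x _ hlam, hkink, ← relu_sub_convex_comb x hlt.le ht.1.le ht.2 hgap]

/-- The hidden-layer image of the sample over the activation region of the suffix pattern
with first 1 at (0-based) position `i ≥ 1` equals the conical segment
`ℝ_{>0}(e_{i−1}, e_i]` where `e_k = σ(X − x^{(k)}·1)`. -/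
theorem stmt4 (n : ℕ) (hn : 2 ≤ n) (x : Fin n → ℝ) (hx : StrictMono x)
    (i : Fin n) (hi : 1 ≤ (i : ℕ)) :
    {v : Fin n → ℝ | ∃ w b : ℝ, (∀ j : Fin n, (0 ≤ w * x j + b ↔ i ≤ j)) ∧
        v = fun j => max (w * x j + b) 0} =
      {v : Fin n → ℝ | ∃ lam > (0 : ℝ), ∃ t ∈ Set.Ioc (0 : ℝ) 1,
        v = lam • ((1 - t) • (fun j =>
              max (x j - x ⟨(i : ℕ) - 1, lt_of_le_of_lt (Nat.sub_le _ _) i.isLt⟩) 0)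
            + t • (fun j => max (x j - x i) 0))} :=
  stmt4_general n x hx i hi
end
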